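/- arXiv:1810.05279 — 3 statements merged into one kernel-verified Lean document; each statement's English description precedes it below -/
import Mathlib

section
/- Every connected component of the niche graph of a bipartite tournament has diameter at most 2. -/
structure BipTournament (α : Type*) where
  U : Set α
  V : Set α
  A : α → α → Prop
  disj : Disjoint U V
  cover : U ∪ V = Set.univ
  orient : ∀ u ∈ U, ∀ v ∈ V, Xor' (A u v) (A v u)
  arcs : ∀ x y, A x y → (x ∈ U ∧ y ∈ V) ∨ (x ∈ V ∧ y ∈ U)

def BipTournament.outN {α : Type*} (D : BipTournament α) (x : α) : Set α := {y | D.A x y}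

def BipTournament.inN {α : Type*} (D : BipTournament α) (x : α) : Set α := {y | D.A y x}

def BipTournament.niche {α : Type*} (D : BipTournament α) : SimpleGraph α where
  Adj x y := x ≠ y ∧ ((∃ w, D.A x w ∧ D.A y w) ∨ (∃ w, D.A w x ∧ D.A w y))
  symm := by
    constructor
    rintro x y ⟨h, h'⟩
    exact ⟨h.symm, h'.imp (fun ⟨w, a, b⟩ => ⟨w, b, a⟩) (fun ⟨w, a, b⟩ => ⟨w, b, a⟩)⟩
  loopless := ⟨fun x h => h.1 rfl⟩

/-!
Niche adjacency never leaves a part. Two distinct vertices u, v of the same part are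
non-adjacent in the niche graph exactly when v reverses every arc at u, i.e.
`outN v = V \ outN u`. So if u and v are non-adjacent, every other vertex of the part that is
non-adjacent to v has the same out-neighbourhood as u, hence the same niche neighbours. A walk
from u to v must leave the set of vertices equal to u or adjacent to u but not to v, and the
vertex it steps to is then a common neighbour of u and v.
-/

namespace BipTournament

variable {α : Type*} (D : BipTournament α) {u v w a b : α}

def swap : BipTournament α where
  U := D.V
  V := D.U
  A := D.A
  disj := D.disj.symm
  cover := by rw [Set.union_comm]; exact D.cover
  orient := fun u hu v hv => Or.symm (D.orient v hv u hu)
  arcs := fun x y h => Or.symm (D.arcs x y h)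

lemma not_mem_V_of_mem_U (hu : u ∈ D.U) : u ∉ D.V :=
  Set.disjoint_left.mp D.disj hu

lemma mem_V_of_A (hu : u ∈ D.U) (h : D.A u w) : w ∈ D.V := by
  rcases D.arcs _ _ h with ⟨-, hw⟩ | ⟨hu', -⟩
  · exact hw
  · exact absurd hu' (D.not_mem_V_of_mem_U hu)

lemma mem_V_of_A_rev (hu : u ∈ D.U) (h : D.A w u) : w ∈ D.V := by
  rcases D.arcs _ _ h with ⟨-, hu'⟩ | ⟨hw, -⟩
  · exact absurd hu' (D.not_mem_V_of_mem_U hu)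
  · exact hw

lemma A_rev_iff_not_A (hu : u ∈ D.U) (hw : w ∈ D.V) : D.A w u ↔ ¬ D.A u w := by
  rcases D.orient u hu w hw with ⟨h, h'⟩ | ⟨h, h'⟩ <;> simp only [h, h', not_true, not_false_iff]

lemma mem_U_of_niche_adj (hu : u ∈ D.U) (h : D.niche.Adj u v) : v ∈ D.U := by
  obtain ⟨-, ⟨w, huw, hvw⟩ | ⟨w, hwu, hwv⟩⟩ := h
  · rcases D.arcs _ _ hvw with ⟨hv, -⟩ | ⟨-, hw⟩
    · exact hv
    · exact absurd (D.mem_V_of_A hu huw) (D.not_mem_V_of_mem_U hw)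
  · rcases D.arcs _ _ hwv with ⟨hw, -⟩ | ⟨-, hv⟩
    · exact absurd (D.mem_V_of_A_rev hu hwu) (D.not_mem_V_of_mem_U hw)
    · exact hv

lemma mem_U_of_reachable (hu : u ∈ D.U) (h : D.niche.Reachable u v) : v ∈ D.U := by
  by_contra hv
  obtain ⟨p⟩ := h
  obtain ⟨d, -, hd, hd'⟩ := p.exists_boundary_dart D.U hu hv
  exact hd' (D.mem_U_of_niche_adj hd d.adj)

lemma outN_eq_diff_of_not_niche_adj (hu : u ∈ D.U) (hv : v ∈ D.U) (hne : u ≠ v)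
    (h : ¬ D.niche.Adj u v) : D.outN v = D.V \ D.outN u := by
  ext w
  by_cases hw : w ∈ D.V
  · simp only [outN, Set.mem_sdiff, Set.mem_ofPred_eq, hw, true_and]
    constructor
    · exact fun hvw huw => h ⟨hne, Or.inl ⟨w, huw, hvw⟩⟩
    · intro huw
      by_contra hvw
      rw [← D.A_rev_iff_not_A hu hw] at huw
      rw [← D.A_rev_iff_not_A hv hw] at hvw
      exact h ⟨hne, Or.inr ⟨w, huw, hvw⟩⟩
  · simp only [outN, Set.mem_sdiff, Set.mem_ofPred_eq, hw, false_and, iff_false]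
    exact fun hvw => hw (D.mem_V_of_A hv hvw)

lemma niche_adj_of_outN_eq (ha : a ∈ D.U) (hu : u ∈ D.U) (h : D.outN a = D.outN u)
    (hab : D.niche.Adj a b) (hbu : b ≠ u) : D.niche.Adj u b := by
  obtain ⟨-, ⟨w, haw, hbw⟩ | ⟨w, hwa, hwb⟩⟩ := hab
  · have huw : w ∈ D.outN u := h ▸ haw
    exact ⟨hbu.symm, Or.inl ⟨w, huw, hbw⟩⟩
  · have hw : w ∈ D.V := D.mem_V_of_A_rev ha hwa
    have hwu : D.A w u := by
      rw [D.A_rev_iff_not_A hu hw]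
      rw [D.A_rev_iff_not_A ha hw] at hwa
      exact fun huw => hwa (h.symm ▸ huw : w ∈ D.outN a)
    exact ⟨hbu.symm, Or.inr ⟨w, hwu, hwb⟩⟩

lemma exists_niche_adj_adj (hu : u ∈ D.U) (hreach : D.niche.Reachable u v) (hne : u ≠ v)
    (hnadj : ¬ D.niche.Adj u v) : ∃ x, D.niche.Adj u x ∧ D.niche.Adj x v := by
  have hv : v ∈ D.U := D.mem_U_of_reachable hu hreach
  obtain ⟨p⟩ := hreach
  obtain ⟨d, -, ha, hb⟩ :=
    p.exists_boundary_dart {a | a = u ∨ (D.niche.Adj u a ∧ ¬ D.niche.Adj a v)} (Or.inl rfl)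
      (by rintro (rfl | ⟨h, -⟩) <;> tauto)
  obtain ⟨⟨a, b⟩, hab⟩ := d
  simp only [Set.mem_ofPred_eq, not_or, not_and_not_right] at ha hb
  obtain ⟨hbu, hbv⟩ := hb
  have hub : D.niche.Adj u b := by
    rcases ha with rfl | ⟨hua, hav⟩
    · exact hab
    have haU : a ∈ D.U := D.mem_U_of_niche_adj hu hua
    have hva : v ≠ a := by rintro rfl; exact hnadj hua
    have hout : D.outN a = D.outN u := by
      rw [D.outN_eq_diff_of_not_niche_adj hv haU hva (fun h => hav h.symm),
        D.outN_eq_diff_of_not_niche_adj hv hu hne.symm (fun h => hnadj h.symm)]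
    exact D.niche_adj_of_outN_eq haU hu hout hab hbu
  exact ⟨b, hub, hbv hub⟩

lemma niche_dist_le_two (hu : u ∈ D.U) (hreach : D.niche.Reachable u v) :
    D.niche.dist u v ≤ 2 := by
  by_cases hne : u = v
  · simp [hne]
  by_cases hadj : D.niche.Adj u v
  · simp [SimpleGraph.dist_eq_one_iff_adj.mpr hadj]
  obtain ⟨x, hux, hxv⟩ := D.exists_niche_adj_adj hu hreach hne hadj
  exact (SimpleGraph.dist_le (hux.toWalk.append hxv.toWalk)).trans (by simp)

end BipTournament

theorem stmt10 {α : Type*} (D : BipTournament α) :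
    ∀ u v : α, D.niche.Reachable u v → D.niche.dist u v ≤ 2 := by
  intro u v hreach
  rcases D.cover.symm ▸ Set.mem_univ u with hu | hu
  · exact D.niche_dist_le_two hu hreach
  · exact D.swap.niche_dist_le_two hu hreach
end

section
/- If G is the niche graph of a bipartite tournament, then the complement of G has diameter at most 2 (any two distinct vertices of the complement are at distance at most 2). -/
/-!
Two vertices with a common out- or in-neighbour lie in the same part, so every vertex of `U` is
adjacent to every vertex of `V` in the complement of the niche graph. The complement therefore
contains a spanning complete bipartite graph with nonempty parts, and such a graph has diameter
at most 2.
-/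

namespace SimpleGraph

variable {V : Type*} (G : SimpleGraph V)

theorem reachable_and_dist_le_two_of_adj_of_mem_of_notMem {S : Set V} (hS : S.Nonempty)
    (hSc : Sᶜ.Nonempty) (hadj : ∀ x ∈ S, ∀ y ∉ S, G.Adj x y) (u v : V) :
    G.Reachable u v ∧ G.dist u v ≤ 2 := by
  have via_edge (h : G.Adj u v) : G.Reachable u v ∧ G.dist u v ≤ 2 :=
    ⟨h.reachable, (dist_le h.toWalk).trans (by simp)⟩
  have via_vertex (w : V) (h₁ : G.Adj u w) (h₂ : G.Adj w v) :
      G.Reachable u v ∧ G.dist u v ≤ 2 :=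
    ⟨⟨h₁.toWalk.append h₂.toWalk⟩, (dist_le (h₁.toWalk.append h₂.toWalk)).trans (by simp)⟩
  obtain ⟨x, hx⟩ := hS
  obtain ⟨y, hy⟩ := hSc
  by_cases hu : u ∈ S <;> by_cases hv : v ∈ S
  · exact via_vertex y (hadj u hu y hy) (hadj v hv y hy).symm
  · exact via_edge (hadj u hu v hv)
  · exact via_edge (hadj v hv u hu).symm
  · exact via_vertex x (hadj x hx u hu).symm (hadj x hx v hv)

end SimpleGraph

namespace BipTournament

variable {α : Type*} (D : BipTournament α)

theorem mem_V_iff_notMem_U {x : α} : x ∈ D.V ↔ x ∉ D.U := by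
  have hcover : x ∈ D.U ∪ D.V := D.cover ▸ Set.mem_univ x
  exact ⟨fun hV hU => D.disj.le_bot ⟨hU, hV⟩, fun hU => hcover.resolve_left hU⟩

theorem mem_U_iff_notMem_U_of_arc {x y : α} (h : D.A x y) : x ∈ D.U ↔ y ∉ D.U := by
  rw [← D.mem_V_iff_notMem_U]
  rcases D.arcs x y h with ⟨hx, hy⟩ | ⟨hx, hy⟩
  · exact iff_of_true hx hy
  · exact iff_of_false ((D.mem_V_iff_notMem_U).1 hx) ((D.mem_V_iff_notMem_U).not_left.2 hy)

theorem mem_U_iff_of_niche_adj {x y : α} (h : D.niche.Adj x y) : x ∈ D.U ↔ y ∈ D.U := by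
  rcases h.2 with ⟨w, hx, hy⟩ | ⟨w, hx, hy⟩
  · rw [D.mem_U_iff_notMem_U_of_arc hx, D.mem_U_iff_notMem_U_of_arc hy]
  · rw [← not_iff_not, ← D.mem_U_iff_notMem_U_of_arc hx, D.mem_U_iff_notMem_U_of_arc hy]

theorem compl_niche_adj {u v : α} (hu : u ∈ D.U) (hv : v ∉ D.U) : D.nicheᶜ.Adj u v :=
  ⟨fun h => hv (h ▸ hu), fun h => hv ((D.mem_U_iff_of_niche_adj h).1 hu)⟩

end BipTournament

theorem stmt11 {α : Type*} (D : BipTournament α) (hU : D.U.Nonempty) (hV : D.V.Nonempty) :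
    ∀ u v : α, u ≠ v → (D.niche)ᶜ.Reachable u v ∧ (D.niche)ᶜ.dist u v ≤ 2 := by
  intro u v _
  have hUc : D.Uᶜ.Nonempty := hV.mono fun _ => D.mem_V_iff_notMem_U.1
  exact D.nicheᶜ.reachable_and_dist_le_two_of_adj_of_mem_of_notMem hU hUc
    (fun _ hx _ hy => D.compl_niche_adj hx hy) u v
end

section
/- Let G be the niche graph of a bipartite tournament. Then G has a matching M leaving at most 4 vertices unsaturated; equivalently, the maximum matching of G has size at least (|V(G)| − 4)/2. -/
/-! A maximal matching leaves an independent set unsaturated. In the niche graph of a bipartite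
tournament, fixing any vertex `v`, the opposite side is covered by the in-neighbourhood and the
out-neighbourhood of `v`, both cliques (common out-neighbour resp. common in-neighbour `v`). An
independent set meets each clique at most once, so it has at most two vertices on each side. -/

namespace SimpleGraph

variable {V : Type*} {G : SimpleGraph V}

theorem exists_isMatching_isIndepSet_compl_verts [Finite V] (G : SimpleGraph V) :
    ∃ M : G.Subgraph, M.IsMatching ∧ G.IsIndepSet M.vertsᶜ := by
  obtain ⟨M, hM, hmax⟩ := (Set.toFinite {M : G.Subgraph | M.IsMatching}).exists_maximal
    ⟨⊥, fun _ hv => hv.elim⟩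
  refine ⟨M, hM, fun x hx y hy _ hxy => ?_⟩
  have hdisj : Disjoint M.support (G.subgraphOfAdj hxy).support := by
    rw [hM.support_eq_verts, support_subgraphOfAdj]
    exact Set.disjoint_right.mpr fun a ha => by rcases ha with rfl | rfl <;> assumption
  have hle := hmax (hM.sup (.subgraphOfAdj hxy) hdisj) le_sup_left
  exact hx ((le_sup_right.trans hle).1 (Set.mem_insert x {y}))

theorem IsIndepSet.subsingleton_inter {s K : Set V} (hs : G.IsIndepSet s) (hK : G.IsClique K) :
    (s ∩ K).Subsingleton := fun _ hx _ hy =>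
  by_contra fun hne => hs hx.1 hy.1 hne (hK hx.2 hy.2 hne)

theorem IsIndepSet.ncard_inter_le_two {s X K L : Set V} (hs : G.IsIndepSet s)
    (hK : G.IsClique K) (hL : G.IsClique L) (hX : X ⊆ K ∪ L) : (s ∩ X).ncard ≤ 2 := by
  have hsK := hs.subsingleton_inter hK
  have hsL := hs.subsingleton_inter hL
  have hsub : s ∩ X ⊆ (s ∩ K) ∪ (s ∩ L) := by
    rw [← Set.inter_union_distrib_left]; exact Set.inter_subset_inter_right s hX
  calc (s ∩ X).ncard
      ≤ ((s ∩ K) ∪ (s ∩ L)).ncard := Set.ncard_le_ncard hsub (hsK.finite.union hsL.finite)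
    _ ≤ (s ∩ K).ncard + (s ∩ L).ncard := Set.ncard_union_le _ _
    _ ≤ 1 + 1 := add_le_add ((Set.ncard_le_one_iff hsK.finite).2 fun ha hb => hsK ha hb)
        ((Set.ncard_le_one_iff hsL.finite).2 fun ha hb => hsL ha hb)

end SimpleGraph

namespace BipTournament

variable {α : Type*} (D : BipTournament α)

theorem isClique_niche_inN (v : α) : D.niche.IsClique (D.inN v) :=
  fun _ hx _ hy hxy => ⟨hxy, .inl ⟨v, hx, hy⟩⟩

theorem isClique_niche_outN (v : α) : D.niche.IsClique (D.outN v) :=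
  fun _ hx _ hy hxy => ⟨hxy, .inr ⟨v, hx, hy⟩⟩

theorem U_subset_inN_union_outN {v : α} (hv : v ∈ D.V) : D.U ⊆ D.inN v ∪ D.outN v :=
  fun u hu => Xor.or (D.orient u hu v hv)

theorem V_subset_inN_union_outN {u : α} (hu : u ∈ D.U) : D.V ⊆ D.inN u ∪ D.outN u :=
  fun v hv => (Xor.or (D.orient u hu v hv)).symm

variable {D}

theorem ncard_inter_U_le_two {s : Set α} (hs : D.niche.IsIndepSet s) (hV : D.V.Nonempty) :
    (s ∩ D.U).ncard ≤ 2 := by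
  obtain ⟨v, hv⟩ := hV
  exact hs.ncard_inter_le_two (D.isClique_niche_inN v)
    (D.isClique_niche_outN v) (D.U_subset_inN_union_outN hv)

theorem ncard_inter_V_le_two {s : Set α} (hs : D.niche.IsIndepSet s) (hU : D.U.Nonempty) :
    (s ∩ D.V).ncard ≤ 2 := by
  obtain ⟨u, hu⟩ := hU
  exact hs.ncard_inter_le_two (D.isClique_niche_inN u)
    (D.isClique_niche_outN u) (D.V_subset_inN_union_outN hu)

end BipTournament

theorem stmt19 {α : Type*} [Fintype α] (D : BipTournament α)
    (hU : D.U.Nonempty) (hV : D.V.Nonempty) :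
    ∃ M : D.niche.Subgraph, M.IsMatching ∧ (Set.univ \ M.verts).ncard ≤ 4 := by
  obtain ⟨M, hM, hindep⟩ := D.niche.exists_isMatching_isIndepSet_compl_verts
  refine ⟨M, hM, ?_⟩
  have hsplit : Set.univ \ M.verts = (M.vertsᶜ ∩ D.U) ∪ (M.vertsᶜ ∩ D.V) := by
    rw [← Set.inter_union_distrib_left, D.cover, Set.inter_univ, Set.compl_eq_univ_sdiff]
  calc (Set.univ \ M.verts).ncard
      ≤ (M.vertsᶜ ∩ D.U).ncard + (M.vertsᶜ ∩ D.V).ncard :=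
        hsplit ▸ Set.ncard_union_le _ _
    _ ≤ 2 + 2 := add_le_add (BipTournament.ncard_inter_U_le_two hindep hV)
        (BipTournament.ncard_inter_V_le_two hindep hU)
end
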